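/- arXiv:1405.1125 — 3 statements merged into one kernel-verified Lean document; each statement's English description precedes it below -/
import Mathlib

section
/- Define T : ℤ × ℤ → ℤ × ℤ by: T(t,e) = (t, 0) if t = 0 and e = 0; T(t,e) = (t, 1) if t ≤ 0, e ∈ {0,1}, and (t,e) ≠ (0,0); and T(t,e) = (t+1, 1) if t > 0 or e = −1. Then for every integer n ≥ 1 and every pair (t,e) with e ∈ {−1,0,1}, the first component of the n-fold iterate T^n(t,e) equals: t, if t ≤ 0 and e ∈ {0,1}; t+1, if t < 0 and e = −1; and t+n, if t > 0 or (t = 0 and e = −1). -/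
/-- The map `T : ℤ × ℤ → ℤ × ℤ` encoding the action of the Mazur-pattern satellite
operator `Q` on the pair `(τ(K), ε(K))`:
`T(t,e) = (t,0)` if `t = 0` and `e = 0`;
`T(t,e) = (t,1)` if `t ≤ 0`, `e ∈ {0,1}`, and `(t,e) ≠ (0,0)`;
`T(t,e) = (t+1,1)` if `t > 0` or `e = -1`. -/
def T : ℤ × ℤ → ℤ × ℤ := fun p =>
  if p.1 = 0 ∧ p.2 = 0 then (p.1, 0)
  else if p.1 ≤ 0 ∧ (p.2 = 0 ∨ p.2 = 1) then (p.1, 1)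
  else (p.1 + 1, 1)

lemma iter_nonpos : ∀ (n : ℕ) (t e : ℤ), t ≤ 0 → (e = 0 ∨ e = 1) →
    (T^[n] (t, e)).1 = t ∧ ((T^[n] (t, e)).2 = 0 ∨ (T^[n] (t, e)).2 = 1) := by
  intro n
  induction n with
  | zero => intro t e ht he; exact ⟨rfl, he⟩
  | succ k ih =>
    intro t e ht he
    rw [Function.iterate_succ_apply]
    by_cases h : t = 0 ∧ e = 0
    · have : T (t, e) = (t, 0) := by simp [T, h]
      rw [this]; exact ih t 0 ht (Or.inl rfl)
    · have : T (t, e) = (t, 1) := by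
        simp only [T]
        rw [if_neg (by simpa using h), if_pos ⟨ht, he⟩]
      rw [this]; exact ih t 1 ht (Or.inr rfl)

lemma iter_pos : ∀ (n : ℕ) (t e : ℤ), 0 < t → (T^[n] (t, e)).1 = t + n := by
  intro n
  induction n with
  | zero => intro t e ht; simp
  | succ k ih =>
    intro t e ht
    rw [Function.iterate_succ_apply]
    have : T (t, e) = (t + 1, 1) := by
      simp only [T]
      rw [if_neg (by rintro ⟨h, _⟩; omega), if_neg (by rintro ⟨h, _⟩; omega)]
    rw [this, ih (t + 1) 1 (by omega)]
    push_cast; ring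

/-- For every integer `n ≥ 1` and every pair `(t,e)` with `e ∈ {-1,0,1}`, the first
component of the `n`-fold iterate `T^[n] (t,e)` equals `t` if `t ≤ 0` and `e ∈ {0,1}`;
`t + 1` if `t < 0` and `e = -1`; and `t + n` if `t > 0` or (`t = 0` and `e = -1`). -/
theorem iterate_fst (n : ℕ) (hn : 1 ≤ n) (t e : ℤ) (he : e = -1 ∨ e = 0 ∨ e = 1) :
    ((t ≤ 0 ∧ (e = 0 ∨ e = 1)) → (T^[n] (t, e)).1 = t) ∧
    ((t < 0 ∧ e = -1) → (T^[n] (t, e)).1 = t + 1) ∧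
    ((0 < t ∨ (t = 0 ∧ e = -1)) → (T^[n] (t, e)).1 = t + n) := by
  obtain ⟨m, rfl⟩ : ∃ m, n = m + 1 := ⟨n - 1, by omega⟩
  refine ⟨fun ⟨ht, he'⟩ => (iter_nonpos _ t e ht he').1, fun ⟨ht, he'⟩ => ?_, fun h => ?_⟩
  · subst he'
    rw [Function.iterate_succ_apply]
    have : T (t, -1) = (t + 1, 1) := by
      simp only [T]
      rw [if_neg (by rintro ⟨_, h⟩; omega), if_neg (by rintro ⟨_, h⟩; omega)]
    rw [this]
    exact (iter_nonpos m (t + 1) 1 (by omega) (Or.inr rfl)).1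
  · rcases h with ht | ⟨ht, he'⟩
    · exact iter_pos _ t e ht
    · subst ht; subst he'
      rw [Function.iterate_succ_apply]
      have : T (0, -1) = (1, 1) := by norm_num [T]
      rw [this, iter_pos m 1 1 (by omega)]
      push_cast; ring
end

section
/- Define T : ℤ × ℤ → ℤ × ℤ by: T(t,e) = (t, 0) if t = 0 and e = 0; T(t,e) = (t, 1) if t ≤ 0, e ∈ {0,1}, and (t,e) ≠ (0,0); and T(t,e) = (t+1, 1) if t > 0 or e = −1. Then for every integer n ≥ 2, every pair (t,e) with e ∈ {−1,0,1}, and every integer m with 1 ≤ m ≤ n−1, the first component of T^n(t,e) is not equal to m. -/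
lemma T_iter_nonpos (k : ℕ) : ∀ t e : ℤ, t ≤ 0 → (e = 0 ∨ e = 1) →
    (T^[k] (t, e)).1 = t := by
  induction k with
  | zero => intro t e _ _; simp
  | succ k ih =>
    intro t e ht he
    rw [Function.iterate_succ_apply]
    by_cases h : t = 0 ∧ e = 0
    · simp only [T, h.1, h.2]
      simpa using ih 0 0 le_rfl (Or.inl rfl)
    · have : T (t, e) = (t, 1) := by
        simp only [T]
        rw [if_neg h, if_pos ⟨ht, he⟩]
      rw [this]
      exact ih t 1 ht (Or.inr rfl)

lemma T_iter_pos (k : ℕ) : ∀ t e : ℤ, 0 < t → (T^[k] (t, e)).1 = t + k := by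
  induction k with
  | zero => intro t e _; simp
  | succ k ih =>
    intro t e ht
    rw [Function.iterate_succ_apply]
    have : T (t, e) = (t + 1, 1) := by
      simp only [T]
      rw [if_neg (by rintro ⟨h, -⟩; omega), if_neg (by rintro ⟨h, -⟩; omega)]
    rw [this, ih (t + 1) 1 (by omega)]
    push_cast
    ring

/-- For every integer `n ≥ 2`, every pair `(t,e)` with `e ∈ {-1,0,1}`, and every
integer `m` with `1 ≤ m ≤ n - 1`, the first component of `T^[n] (t,e)` is not `m`. -/
theorem iterate_fst_ne (n : ℕ) (hn : 2 ≤ n) (t e : ℤ) (he : e = -1 ∨ e = 0 ∨ e = 1)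
    (m : ℤ) (hm1 : 1 ≤ m) (hm2 : m ≤ (n : ℤ) - 1) :
    (T^[n] (t, e)).1 ≠ m := by
  rcases lt_or_ge 0 t with ht | ht
  · rw [T_iter_pos n t e ht]; omega
  · rcases he with he | he
    · -- e = -1 : first step goes to (t+1, 1)
      obtain ⟨k, rfl⟩ : ∃ k, n = k + 1 := ⟨n - 1, by omega⟩
      rw [Function.iterate_succ_apply]
      have hT : T (t, e) = (t + 1, 1) := by
        simp only [T, he]
        rw [if_neg (by rintro ⟨-, h⟩; omega), if_neg (by rintro ⟨-, h | h⟩ <;> omega)]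
      rw [hT]
      rcases lt_or_ge 0 (t + 1) with h1 | h1
      · rw [T_iter_pos k (t + 1) 1 h1]
        omega
      · rw [T_iter_nonpos k (t + 1) 1 h1 (Or.inr rfl)]
        omega
    · rw [T_iter_nonpos n t e ht he]
      omega
end

section
/- Let M be the free R-module on nine generators x0, x2, y2, x4, y4, r6, r9, s6, s9, and let d : M → M be the R-linear map with d(x2) = x0 + U²·y2, d(x4) = y2 + U²·y4 + U·r6, d(r6) = U·s6, d(r9) = r6 + U·s9, d(y4) = s6, d(s9) = s6, and d(x0) = d(y2) = d(s6) = 0. Then d ∘ d = 0, and the homology H = ker d / im d is a free R-module of rank 1, generated by the class of y4 + s9. -/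
noncomputable section

/-- `R = 𝔽₂[U]`, the polynomial ring in one variable over the field with two elements. -/
abbrev R : Type := Polynomial (ZMod 2)

/-- The variable `U` of `R = 𝔽₂[U]`. -/
def U : R := Polynomial.X

/-- The free `R`-module on nine generators. -/
abbrev M : Type := Fin 9 → R

def x0 : M := Pi.single 0 1
def x2 : M := Pi.single 1 1
def y2 : M := Pi.single 2 1
def x4 : M := Pi.single 3 1
def y4 : M := Pi.single 4 1
def r6 : M := Pi.single 5 1
def r9 : M := Pi.single 6 1
def s6 : M := Pi.single 7 1
def s9 : M := Pi.single 8 1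


lemma h2R : (2:R) = 0 := by
  have := CharP.cast_eq_zero R 2
  exact_mod_cast this

lemma hv (v : M) : v = v 0 • x0 + v 1 • x2 + v 2 • y2 + v 3 • x4 + v 4 • y4
    + v 5 • r6 + v 6 • r9 + v 7 • s6 + v 8 • s9 := by
  funext j
  fin_cases j <;>
    simp [x0, x2, y2, x4, y4, r6, r9, s6, s9, Pi.single_apply]

def f : M →ₗ[R] R :=
  U^4 • LinearMap.proj 0 + U^2 • LinearMap.proj 2 + U • LinearMap.proj 5 + LinearMap.proj 8

lemma f_apply (v : M) : f v = U^4 * v 0 + U^2 * v 2 + U * v 5 + v 8 := by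
  simp [f, smul_eq_mul]

/-- Let `M` be the free `R`-module on the nine generators `x0, x2, y2, x4, y4, r6, r9, s6, s9`,
and let `d : M → M` be the `R`-linear map with `d x2 = x0 + U² • y2`,
`d x4 = y2 + U² • y4 + U • r6`, `d r6 = U • s6`, `d r9 = r6 + U • s9`, `d y4 = s6`,
`d s9 = s6`, and `d x0 = d y2 = d s6 = 0`.  Then `d ∘ d = 0`, and the homology
`H = ker d / im d` is a free `R`-module of rank one generated by the class of `y4 + s9`,
i.e. the map `R → H`, `r ↦ r • [y4 + s9]`, is bijective. -/
theorem homology_free_rank_one (d : M →ₗ[R] M)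
    (hx2 : d x2 = x0 + (U ^ 2) • y2)
    (hx4 : d x4 = y2 + (U ^ 2) • y4 + U • r6)
    (hr6 : d r6 = U • s6)
    (hr9 : d r9 = r6 + U • s9)
    (hy4 : d y4 = s6)
    (hs9 : d s9 = s6)
    (hx0 : d x0 = 0) (hy2 : d y2 = 0) (hs6 : d s6 = 0) :
    d ∘ₗ d = 0 ∧
    ∃ hz : y4 + s9 ∈ LinearMap.ker d,
      Function.Bijective
        (LinearMap.toSpanSingleton R
          (LinearMap.ker d ⧸ (LinearMap.range d).comap (LinearMap.ker d).subtype)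
          (Submodule.Quotient.mk ⟨y4 + s9, hz⟩)) := by
  have hd : ∀ v : M, d v = v 1 • (x0 + U^2 • y2) + v 3 • (y2 + U^2 • y4 + U • r6)
      + v 5 • (U • s6) + v 6 • (r6 + U • s9) + v 4 • s6 + v 8 • s6 := by
    intro v
    conv_lhs => rw [hv v]
    simp only [map_add, map_smul, hx0, hx2, hy2, hx4, hy4, hr6, hr9, hs6, hs9,
      smul_zero, zero_add, add_zero]
    abel
  have hss : (s6 : M) + s6 = 0 := by
    rw [s6, ← Pi.single_add, show (1:R)+1 = 0 by linear_combination h2R, Pi.single_zero]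
  have hz : y4 + s9 ∈ LinearMap.ker d := by
    rw [LinearMap.mem_ker, map_add, hy4, hs9, hss]
  -- f kills the image of d
  have hfd : ∀ w : M, f (d w) = 0 := by
    intro w
    rw [hd w]
    simp [f_apply, x0, x2, y2, x4, y4, r6, r9, s6, s9, Pi.single_apply, smul_eq_mul]
    linear_combination (U^4 * w 1 + U^2 * w 3 + U * w 6) * h2R
  have hfz : f (y4 + s9) = 1 := by
    simp [f_apply, y4, s9, Pi.single_apply]
  refine ⟨?_, hz, ?_, ?_⟩
  · -- d ∘ d = 0
    apply LinearMap.ext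
    intro v
    rw [LinearMap.comp_apply, LinearMap.zero_apply, hd v]
    simp only [map_add, map_smul, hx0, hx2, hy2, hx4, hy4, hr6, hr9, hs6, hs9,
      smul_zero, zero_add, add_zero]
    funext j
    fin_cases j <;>
      simp [x0, x2, y2, x4, y4, r6, r9, s6, s9, Pi.single_apply, smul_eq_mul] <;>
      linear_combination (v 3 * U^2 + v 6 * U) * h2R
  · -- injective
    intro a b hab
    simp only [LinearMap.toSpanSingleton_apply] at hab
    have hsub : Submodule.Quotient.mk ((a - b) • (⟨y4 + s9, hz⟩ : LinearMap.ker d))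
        = (0 : LinearMap.ker d ⧸ (LinearMap.range d).comap (LinearMap.ker d).subtype) := by
      rw [Submodule.Quotient.mk_smul, sub_smul, hab, sub_self]
    rw [Submodule.Quotient.mk_eq_zero, Submodule.mem_comap] at hsub
    obtain ⟨w, hw⟩ := hsub
    have h0 := hfd w
    rw [hw] at h0
    have : (a - b) * f (y4 + s9) = 0 := by
      rw [← smul_eq_mul, ← map_smul]
      exact_mod_cast h0
    rw [hfz, mul_one, sub_eq_zero] at this
    exact this
  · -- surjective
    intro q
    obtain ⟨⟨v, hvk⟩, rfl⟩ := Submodule.Quotient.mk_surjective _ q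
    refine ⟨f v, ?_⟩
    simp only [LinearMap.toSpanSingleton_apply]
    rw [← Submodule.Quotient.mk_smul, Submodule.Quotient.eq, Submodule.mem_comap]
    have e := hd v
    rw [LinearMap.mem_ker.mp hvk] at e
    have k1 := congrFun e 0
    have k3 := congrFun e 2
    have k6 := congrFun e 5
    have k7 := congrFun e 7
    simp [x0, x2, y2, x4, y4, r6, r9, s6, s9, Pi.single_apply, smul_eq_mul] at k1 k3 k6 k7
    refine ⟨v 0 • x2 + (v 2 + U^2 * v 0) • x4 + v 7 • y4 + (v 5 + U * v 2 + U^3 * v 0) • r9, ?_⟩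
    have hcoe : ((f v • (⟨y4 + s9, hz⟩ : LinearMap.ker d) - ⟨v, hvk⟩ : LinearMap.ker d) : M)
        = f v • (y4 + s9) - v := rfl
    rw [Submodule.subtype_apply, hcoe, hd _]
    funext j
    fin_cases j
    · simp [f_apply, x0, x2, y2, x4, y4, r6, r9, s6, s9, Pi.single_apply, smul_eq_mul]
      linear_combination v 0 * h2R
    · simp [f_apply, x0, x2, y2, x4, y4, r6, r9, s6, s9, Pi.single_apply, smul_eq_mul]
      linear_combination -k1
    · simp [f_apply, x0, x2, y2, x4, y4, r6, r9, s6, s9, Pi.single_apply, smul_eq_mul]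
      linear_combination (U^2 * v 0 + v 2) * h2R
    · simp [f_apply, x0, x2, y2, x4, y4, r6, r9, s6, s9, Pi.single_apply, smul_eq_mul]
      linear_combination -k3 + U^2 * k1
    · simp [f_apply, x0, x2, y2, x4, y4, r6, r9, s6, s9, Pi.single_apply, smul_eq_mul]
      linear_combination -k7 + (-(U * v 5) - v 8) * h2R
    · simp [f_apply, x0, x2, y2, x4, y4, r6, r9, s6, s9, Pi.single_apply, smul_eq_mul]
      linear_combination (U * v 2 + U^3 * v 0 + v 5) * h2R
    · simp [f_apply, x0, x2, y2, x4, y4, r6, r9, s6, s9, Pi.single_apply, smul_eq_mul]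
      linear_combination -k6 + U * k3 - U^3 * k1
    · simp [f_apply, x0, x2, y2, x4, y4, r6, r9, s6, s9, Pi.single_apply, smul_eq_mul]
      linear_combination v 7 * h2R
    · simp [f_apply, x0, x2, y2, x4, y4, r6, r9, s6, s9, Pi.single_apply, smul_eq_mul]
      linear_combination (0:R) * h2R
end
end
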